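/- arXiv:2403.07590 — 2 statements merged into one kernel-verified Lean document; each statement's English description precedes it below -/
import Mathlib

section
/- Value of the constant part of the twisted propagator: let V be a vector space over a field of characteristic zero, p ≥ 1 an integer, and g a linear endomorphism of V with g^p = id such that id − g^{-1} is invertible. Then (1/p) · Σ_{k=0}^{p-1} (k − (p−1)/2) · g^{-k} = −(id − g^{-1})^{-1}. -/
/-- if `g^p = id` (so `g⁻¹ = g^(p-1)`) and `id - g⁻¹` is
invertible, then `(1/p) · ∑_{k=0}^{p-1} (k − (p−1)/2) · g^{-k} = −(id − g⁻¹)⁻¹`. -/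
theorem constant_part_twisted_propagator
    (K : Type*) [Field K] [CharZero K] (V : Type*) [AddCommGroup V] [Module K V]
    (p : ℕ) (hp : 1 ≤ p) (g : Module.End K V) (hgp : g ^ p = 1)
    (hinv : IsUnit (1 - g ^ (p - 1))) :
    ((1 : K) / p) • ∑ k ∈ Finset.range p,
        ((k : K) - ((p : K) - 1) / 2) • (g ^ (p - 1)) ^ k =
      -Ring.inverse (1 - g ^ (p - 1)) := by
  obtain ⟨n, rfl⟩ : ∃ n, p = n + 1 := ⟨p - 1, (Nat.succ_pred_eq_of_pos hp).symm⟩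
  simp only [Nat.add_sub_cancel] at *
  set h := g ^ n with hh
  have hhp : h ^ (n + 1) = 1 := by
    rw [hh, ← pow_mul, mul_comm, pow_mul, hgp, one_pow]
  set c : ℕ → K := fun k => (k : K) - ((n + 1 : ℕ) - 1 : K) / 2 with hc
  set S := ∑ k ∈ Finset.range (n + 1), c k • h ^ k with hS
  have hunit' : IsUnit (h - 1) := by simpa [neg_sub] using hinv.neg
  have hG : (∑ k ∈ Finset.range (n + 1), h ^ k) = 0 := by
    apply hunit'.mul_right_cancel
    rw [geom_sum_mul, hhp, sub_self, zero_mul]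
  have hGn : (∑ k ∈ Finset.range n, h ^ (k + 1)) = -1 := by
    rw [Finset.sum_range_succ' (fun k => h ^ k)] at hG
    simpa [eq_neg_iff_add_eq_zero] using hG
  have key : (1 - h) * S = (-(n + 1 : K)) • 1 := by
    have hA : h * S = ∑ k ∈ Finset.range (n + 1), c k • h ^ (k + 1) := by
      rw [hS, Finset.mul_sum]
      refine Finset.sum_congr rfl fun k _ => ?_
      rw [mul_smul_comm, ← pow_succ']
    rw [sub_mul, one_mul, hA, hS,
      Finset.sum_range_succ' (fun k => c k • h ^ k),
      Finset.sum_range_succ (fun k => c k • h ^ (k + 1)), hhp]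
    have hstep : (∑ k ∈ Finset.range n, c (k + 1) • h ^ (k + 1))
        - ∑ k ∈ Finset.range n, c k • h ^ (k + 1)
        = ∑ k ∈ Finset.range n, h ^ (k + 1) := by
      rw [← Finset.sum_sub_distrib]
      refine Finset.sum_congr rfl fun k _ => ?_
      rw [← sub_smul]
      have : c (k + 1) - c k = 1 := by simp only [hc]; push_cast; ring
      rw [this, one_smul]
    have hc0 : c 0 • (h ^ 0 : Module.End K V) - c n • 1 = (-(n : K)) • 1 := by
      rw [pow_zero, ← sub_smul]
      congr 1
      simp only [hc]; push_cast; ring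
    calc (∑ k ∈ Finset.range n, c (k + 1) • h ^ (k + 1)) + c 0 • h ^ 0
          - ((∑ k ∈ Finset.range n, c k • h ^ (k + 1)) + c n • 1)
        = ((∑ k ∈ Finset.range n, c (k + 1) • h ^ (k + 1))
            - ∑ k ∈ Finset.range n, c k • h ^ (k + 1))
          + (c 0 • h ^ 0 - c n • 1) := by abel
      _ = (-1 : Module.End K V) + (-(n : K)) • 1 := by rw [hstep, hGn, hc0]
      _ = (-(n + 1 : K)) • 1 := by
          rw [neg_add, add_smul, neg_smul, neg_smul, one_smul]
          abel
  have hp0 : ((n : K) + 1) ≠ 0 := by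
    exact_mod_cast (Nat.cast_add_one_ne_zero n (R := K))
  apply hinv.mul_left_cancel
  rw [mul_smul_comm, key, mul_neg, Ring.mul_inverse_cancel _ hinv]
  rw [smul_smul]
  push_cast
  rw [div_mul_eq_mul_div, one_mul, neg_div, div_self hp0, neg_smul, one_smul]
end

section
/- Cyclic wheel integral and Bernoulli numbers: for every integer k ≥ 2, the integral I_k = ∫_{[0,1]^{k-1}} Π_{i=0}^{k-1} ( frac(t_{i+1} − t_i) − 1/2 ) dt₁ ⋯ dt_{k-1}, where t₀ = t_k = 0 and frac denotes the fractional part, satisfies I_k = 0 when k is odd and I_k = −B_k/k! when k is even, where B_k is the k-th Bernoulli number; equivalently, for even k, I_k = 2ζ(k)/(2πi)^k. -/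
/-!
Write `B̄ₖ(x) = Bₖ(frac x)` for the periodic Bernoulli functions, so that the integrand is the
product of `B̄₁(tᵢ₊₁ - tᵢ)` along the closed path `0 → t₁ → ⋯ → t_{k-1} → 0`. The key identity is
the convolution `∫₀¹ B̄₁(x - t) B̄ⱼ(t) dt = -B̄ⱼ₊₁(x) / (j + 1)` for `j ≥ 1`, which follows from
integrating `Bⱼ` against the two linear pieces of `B̄₁(x - ·)` on `[0, x]` and `[x, 1]`.
Integrating out the vertices of a path `a → t₁ → ⋯ → tₘ → b` one at a time therefore gives
`(-1)ᵐ B̄ₘ₊₁(b - a) / (m + 1)!`, which for `a = b = 0` and `k = m + 1` is `(-1)ᵏ⁻¹ Bₖ / k!`;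
odd Bernoulli numbers `Bₖ` with `k ≥ 3` vanish, and Euler's formula for `ζ(2r)` gives the zeta
form.
-/

open scoped Real
open MeasureTheory intervalIntegral Function Set

noncomputable def periodicBernoulliFun (k : ℕ) (x : ℝ) : ℝ := bernoulliFun k (Int.fract x)

namespace periodicBernoulliFun

lemma periodic (k : ℕ) : Periodic (periodicBernoulliFun k) 1 := fun x => by
  simp [periodicBernoulliFun, Int.fract_add_one]

lemma one_apply (x : ℝ) : periodicBernoulliFun 1 x = Int.fract x - 1 / 2 :=
  bernoulliFun_one _

lemma apply_of_mem_Ico (k : ℕ) {x : ℝ} (hx : x ∈ Ico 0 1) :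
    periodicBernoulliFun k x = bernoulliFun k x := by
  rw [periodicBernoulliFun, Int.fract_eq_self.2 hx]

lemma measurable (k : ℕ) : Measurable (periodicBernoulliFun k) :=
  (continuous_bernoulliFun k).measurable.comp measurable_fract

lemma abs_one_le (x : ℝ) : |periodicBernoulliFun 1 x| ≤ 1 := by
  rw [one_apply, abs_le]
  constructor <;> linarith [Int.fract_nonneg x, Int.fract_lt_one x]

lemma intervalIntegrable_one_comp_sub (x a b : ℝ) :
    IntervalIntegrable (fun t => periodicBernoulliFun 1 (x - t)) volume a b :=
  intervalIntegrable_iff.2 <| IntegrableOn.of_bound measure_Ioc_lt_top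
    ((measurable 1).comp (measurable_const.sub measurable_id)).aestronglyMeasurable 1
    (ae_of_all _ fun _ => abs_one_le _)

end periodicBernoulliFun

theorem Function.Periodic.intervalIntegral_comp_sub_left {E : Type*} [NormedAddCommGroup E]
    [NormedSpace ℝ E] {f : ℝ → E} {T : ℝ} (hf : Periodic f T) (t c : ℝ) :
    ∫ x in t..t + T, f (c - x) = ∫ x in t..t + T, f x := by
  rw [integral_comp_sub_left, ← hf.intervalIntegral_add_eq (c - (t + T)) t]
  ring_nf

theorem setIntegral_Icc_fin_succ {E : Type*} [NormedAddCommGroup E] [NormedSpace ℝ E] {m : ℕ}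
    {F : (Fin (m + 1) → ℝ) → E} {a b : Fin (m + 1) → ℝ} (hF : IntegrableOn F (Icc a b)) :
    ∫ x in Icc a b, F x =
      ∫ t in Icc (a 0) (b 0), ∫ y in Icc (Fin.tail a) (Fin.tail b), F (Fin.cons t y) := by
  set e : ℝ × (Fin m → ℝ) ≃ᵐ (Fin (m + 1) → ℝ) :=
    (MeasurableEquiv.piFinSuccAbove (fun _ => ℝ) 0).symm
  have he : MeasurePreserving e :=
    (volume_preserving_piFinSuccAbove (fun _ : Fin (m + 1) => ℝ) 0).symm _
  have hpre : e ⁻¹' Icc a b = Icc (a 0) (b 0) ×ˢ Icc (Fin.tail a) (Fin.tail b) :=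
    ((Fin.insertNthOrderIso (fun _ => ℝ) 0).preimage_Icc _ _).trans (Icc_prod_eq _ _)
  rw [← he.map_eq, setIntegral_map_equiv, hpre, Measure.volume_eq_prod, setIntegral_prod]
  · congr! with t - y
    simp only [e, MeasurableEquiv.piFinSuccAbove_symm_apply, Fin.insertNthEquiv, Equiv.coe_fn_mk,
      Fin.zero_succAbove, Fin.insertNth_zero', Fin.removeNth_zero]
  · rw [← hpre, ← Measure.volume_eq_prod]
    exact (he.integrableOn_comp_preimage e.measurableEmbedding).2 hF

theorem integral_sub_mul_bernoulliFun (k : ℕ) (c a b : ℝ) :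
    ∫ t in a..b, (c - t) * bernoulliFun k t =
      ((c - b) * bernoulliFun (k + 1) b - (c - a) * bernoulliFun (k + 1) a) / (k + 1) +
        (bernoulliFun (k + 2) b - bernoulliFun (k + 2) a) / ((k + 1) * (k + 2)) := by
  have hderiv : ∀ t, HasDerivAt (fun t => ((c - t) * bernoulliFun (k + 1) t +
      bernoulliFun (k + 2) t / (k + 2)) / (k + 1)) ((c - t) * bernoulliFun k t) t := by
    intro t
    refine ((((hasDerivAt_id t).const_sub c).fun_mul (hasDerivAt_bernoulliFun (k + 1) t)).add
      ((hasDerivAt_bernoulliFun (k + 2) t).div_const ((k : ℝ) + 2))).div_const ((k : ℝ) + 1)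
      |>.congr_deriv ?_
    simp only [id, Nat.add_sub_cancel, show k + 2 - 1 = k + 1 by omega]
    push_cast
    field_simp
    ring
  rw [integral_eq_sub_of_hasDerivAt (fun t _ => hderiv t)
    ((by fun_prop : Continuous fun t => (c - t) * bernoulliFun k t).intervalIntegrable _ _)]
  field_simp
  ring

open periodicBernoulliFun in
theorem integral_periodicBernoulliFun_one_sub_mul_of_mem_Ico {k : ℕ} (hk : k ≠ 0) {x : ℝ}
    (hx : x ∈ Ico 0 1) :
    ∫ t in 0..1, periodicBernoulliFun 1 (x - t) * periodicBernoulliFun k t =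
      -bernoulliFun (k + 1) x / (k + 1) := by
  have hint : ∀ a b, IntervalIntegrable
      (fun t => periodicBernoulliFun 1 (x - t) * bernoulliFun k t) volume a b := fun a b =>
    (intervalIntegrable_one_comp_sub x a b).mul_continuousOn
      (continuous_bernoulliFun k).continuousOn
  calc ∫ t in 0..1, periodicBernoulliFun 1 (x - t) * periodicBernoulliFun k t
      = ∫ t in 0..1, periodicBernoulliFun 1 (x - t) * bernoulliFun k t := by
        refine integral_congr_ae ?_
        filter_upwards [volume.ae_ne 1] with t ht1 ht
        rw [uIoc_of_le zero_le_one] at ht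
        rw [apply_of_mem_Ico k ⟨ht.1.le, lt_of_le_of_ne ht.2 ht1⟩]
    _ = (∫ t in 0..x, (x - 1 / 2 - t) * bernoulliFun k t) +
          ∫ t in x..1, (x + 1 / 2 - t) * bernoulliFun k t := by
        rw [← integral_add_adjacent_intervals (hint 0 x) (hint x 1)]
        congr 1 <;> refine integral_congr_ae (ae_of_all _ fun t ht => ?_)
        · rw [uIoc_of_le hx.1] at ht
          rw [apply_of_mem_Ico 1 ⟨by linarith [ht.2], by linarith [ht.1, hx.2]⟩, bernoulliFun_one]
          ring
        · rw [uIoc_of_le hx.2.le] at ht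
          rw [← periodic 1, apply_of_mem_Ico 1 ⟨by linarith [ht.2, hx.1], by linarith [ht.1]⟩,
            bernoulliFun_one]
          ring
    _ = -bernoulliFun (k + 1) x / (k + 1) := by
        rw [integral_sub_mul_bernoulliFun, integral_sub_mul_bernoulliFun,
          bernoulliFun_endpoints_eq_of_ne_one (by omega : k + 1 ≠ 1),
          bernoulliFun_endpoints_eq_of_ne_one (by omega : k + 2 ≠ 1)]
        field_simp
        ring

open periodicBernoulliFun in
theorem integral_periodicBernoulliFun_one_sub_mul {k : ℕ} (hk : k ≠ 0) (x : ℝ) :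
    ∫ t in 0..1, periodicBernoulliFun 1 (x - t) * periodicBernoulliFun k t =
      -periodicBernoulliFun (k + 1) x / (k + 1) := by
  have hx : ∀ t, periodicBernoulliFun 1 (x - t) = periodicBernoulliFun 1 (Int.fract x - t) :=
    fun t => by rw [← (periodic 1).sub_int_mul_eq ⌊x⌋, ← Int.self_sub_floor]; ring_nf
  simp_rw [hx]
  exact integral_periodicBernoulliFun_one_sub_mul_of_mem_Ico hk
    ⟨Int.fract_nonneg x, Int.fract_lt_one x⟩

theorem integral_periodicBernoulliFun_one_sub_mul_sub {k : ℕ} (hk : k ≠ 0) (a b : ℝ) :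
    ∫ t in 0..1, periodicBernoulliFun 1 (t - a) * periodicBernoulliFun k (b - t) =
      -periodicBernoulliFun (k + 1) (b - a) / (k + 1) := by
  have hper : Periodic (fun s => periodicBernoulliFun 1 (b - a - s) * periodicBernoulliFun k s) 1 :=
    ((periodicBernoulliFun.periodic 1).const_sub _).mul (periodicBernoulliFun.periodic k)
  have := hper.intervalIntegral_comp_sub_left 0 b
  simp only [zero_add, sub_sub_sub_cancel_left] at this
  rw [this, integral_periodicBernoulliFun_one_sub_mul hk]

-- The `j`-th vertex of the path `a, x 0, …, x (m - 1), b`, and `b` beyond it.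
def pathPoint {m : ℕ} (x : Fin m → ℝ) (a b : ℝ) : ℕ → ℝ
  | 0 => a
  | j + 1 => if h : j < m then x ⟨j, h⟩ else b

lemma pathPoint_succ {m : ℕ} (x : Fin (m + 1) → ℝ) (a b : ℝ) (j : ℕ) :
    pathPoint x a b (j + 1) = pathPoint (Fin.tail x) (x 0) b j := by
  cases j with
  | zero => simp [pathPoint]
  | succ j => simp [pathPoint, Fin.tail, Fin.succ]

lemma measurable_pathPoint {m : ℕ} (a b : ℝ) (j : ℕ) :
    Measurable fun x : Fin m → ℝ => pathPoint x a b j := by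
  cases j with
  | zero => exact measurable_const
  | succ j =>
    simp only [pathPoint]
    split_ifs
    exacts [measurable_pi_apply _, measurable_const]

lemma pathPoint_eq_dite {m : ℕ} (x : Fin m → ℝ) (c : ℝ) (j : ℕ) :
    pathPoint x c c j = if h : 1 ≤ j ∧ j ≤ m then x ⟨j - 1, by omega⟩ else c := by
  cases j with
  | zero => simp [pathPoint]
  | succ j => by_cases hj : j < m <;> simp [pathPoint, hj]

def chainProduct {M : Type*} [CommMonoid M] (g : ℝ → M) {m : ℕ} (x : Fin m → ℝ) (a b : ℝ) : M :=
  ∏ i ∈ Finset.range (m + 1), g (pathPoint x a b (i + 1) - pathPoint x a b i)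

section chainProduct

variable {M : Type*} [CommMonoid M] (g : ℝ → M)

lemma chainProduct_zero (x : Fin 0 → ℝ) (a b : ℝ) : chainProduct g x a b = g (b - a) := by
  simp [chainProduct, pathPoint]

lemma chainProduct_succ {m : ℕ} (x : Fin (m + 1) → ℝ) (a b : ℝ) :
    chainProduct g x a b = g (x 0 - a) * chainProduct g (Fin.tail x) (x 0) b := by
  simp only [chainProduct, Finset.prod_range_succ' _ (m + 1), pathPoint_succ]
  simp [pathPoint, mul_comm]

end chainProduct

lemma measurable_chainProduct {g : ℝ → ℝ} (hg : Measurable g) {m : ℕ} (a b : ℝ) :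
    Measurable fun x : Fin m → ℝ => chainProduct g x a b :=
  Finset.measurable_prod _ fun j _ =>
    hg.comp ((measurable_pathPoint a b (j + 1)).sub (measurable_pathPoint a b j))

lemma abs_chainProduct_le_one {g : ℝ → ℝ} (hg : ∀ u, |g u| ≤ 1) {m : ℕ} (x : Fin m → ℝ)
    (a b : ℝ) : |chainProduct g x a b| ≤ 1 := by
  rw [chainProduct, Finset.abs_prod]
  exact Finset.prod_le_one (fun _ _ => abs_nonneg _) fun _ _ => hg _

open periodicBernoulliFun in
theorem integral_chainProduct_periodicBernoulliFun_one (m : ℕ) (a b : ℝ) :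
    ∫ x in Icc (0 : Fin m → ℝ) 1, chainProduct (periodicBernoulliFun 1) x a b =
      (-1) ^ m * periodicBernoulliFun (m + 1) (b - a) / (m + 1).factorial := by
  induction m generalizing a with
  | zero =>
    have hcube : Icc (0 : Fin 0 → ℝ) 1 = univ :=
      eq_univ_of_forall fun _ => ⟨fun i => i.elim0, fun i => i.elim0⟩
    rw [hcube, setIntegral_univ, Measure.volume_pi_eq_dirac, integral_dirac]
    simp [chainProduct_zero]
  | succ m ih =>
    have hint : IntegrableOn (fun x => chainProduct (periodicBernoulliFun 1) x a b)
        (Icc (0 : Fin (m + 1) → ℝ) 1) :=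
      IntegrableOn.of_bound isCompact_Icc.measure_lt_top
        (measurable_chainProduct (measurable 1) a b).aestronglyMeasurable 1
        (ae_of_all _ fun x => abs_chainProduct_le_one abs_one_le x a b)
    rw [setIntegral_Icc_fin_succ hint]
    change ∫ t in Icc 0 1, ∫ y in Icc (0 : Fin m → ℝ) 1, _ = _
    simp only [chainProduct_succ, Fin.cons_zero, Fin.tail_cons, MeasureTheory.integral_const_mul,
      ih, integral_Icc_eq_integral_Ioc, ← intervalIntegral.integral_of_le zero_le_one]
    calc ∫ t in 0..1, periodicBernoulliFun 1 (t - a) *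
          ((-1) ^ m * periodicBernoulliFun (m + 1) (b - t) / (m + 1).factorial)
        = (-1) ^ m / (m + 1).factorial *
            ∫ t in 0..1, periodicBernoulliFun 1 (t - a) * periodicBernoulliFun (m + 1) (b - t) := by
          rw [← intervalIntegral.integral_const_mul]
          congr 1 with t
          ring
      _ = (-1) ^ (m + 1) * periodicBernoulliFun (m + 2) (b - a) / (m + 2).factorial := by
          rw [integral_periodicBernoulliFun_one_sub_mul_sub m.succ_ne_zero,
            Nat.factorial_succ (m + 1)]
          push_cast
          field_simp
          ring

theorem two_mul_riemannZeta_div_two_pi_I_pow {k : ℕ} (hk : k ≠ 0) (he : Even k) :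
    2 * riemannZeta k / (2 * π * Complex.I) ^ k = -(bernoulli k / k.factorial : ℝ) := by
  obtain ⟨r, rfl⟩ := he
  rw [← two_mul] at hk ⊢
  have hr : r ≠ 0 := by omega
  have hpow :
      (2 * π * Complex.I) ^ (2 * r) = (-1) ^ r * 2 * 2 ^ (2 * r - 1) * (π : ℂ) ^ (2 * r) := by
    rw [mul_assoc _ 2, ← pow_succ', Nat.sub_add_cancel (by omega), pow_mul]
    simp only [mul_pow, Complex.I_sq, ← pow_mul]
    ring
  rw [Nat.cast_mul, Nat.cast_ofNat, riemannZeta_two_mul_nat hr, hpow]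
  push_cast
  field_simp
  ring

/-- cyclic wheel integral and Bernoulli numbers. For `k = n+2 ≥ 2`,
`I_k = ∫_{[0,1]^{k-1}} ∏_{i=0}^{k-1} (frac(t_{i+1} − t_i) − 1/2) dt₁⋯dt_{k-1}`
(with `t₀ = t_k = 0`) vanishes for odd `k` and equals `−B_k/k! = 2ζ(k)/(2πi)^k`
for even `k`. -/
theorem cyclic_wheel_integral_bernoulli (n : ℕ) :
    ∀ I : ℝ,
      I = (∫ x in Set.Icc (0 : Fin (n + 1) → ℝ) 1,
            ∏ i ∈ Finset.range (n + 2),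
              (Int.fract
                ((fun j : ℕ => if h : 1 ≤ j ∧ j ≤ n + 1 then x ⟨j - 1, by omega⟩ else (0 : ℝ))
                    (i + 1) -
                 (fun j : ℕ => if h : 1 ≤ j ∧ j ≤ n + 1 then x ⟨j - 1, by omega⟩ else (0 : ℝ))
                    i) - 1 / 2)) →
      (Odd (n + 2) → I = 0) ∧
      (Even (n + 2) →
        I = -((bernoulli (n + 2) : ℝ) / (n + 2).factorial) ∧
        (I : ℂ) = 2 * riemannZeta ((n + 2 : ℕ) : ℂ) /
          (2 * (π : ℂ) * Complex.I) ^ (n + 2)) := by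
  intro I hI
  have hI_bernoulli : I = (-1) ^ (n + 1) * bernoulli (n + 2) / (n + 2).factorial := by
    have h := integral_chainProduct_periodicBernoulliFun_one (n + 1) 0 0
    rw [sub_zero, periodicBernoulliFun, Int.fract_zero, bernoulliFun_eval_zero] at h
    rw [hI, ← h]
    simp only [chainProduct, pathPoint_eq_dite, periodicBernoulliFun.one_apply]
  refine ⟨fun hodd => ?_, fun heven => ?_⟩
  · simp [hI_bernoulli, bernoulli_eq_zero_of_odd hodd (by omega)]
  · have hsign : (-1 : ℝ) ^ (n + 1) = -1 :=
      (Nat.not_even_iff_odd.1 (Nat.even_add_one.1 heven)).neg_one_pow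
    have hI_even : I = -((bernoulli (n + 2) : ℝ) / (n + 2).factorial) := by
      rw [hI_bernoulli, hsign]
      ring
    refine ⟨hI_even, ?_⟩
    rw [two_mul_riemannZeta_div_two_pi_I_pow (by omega) heven, hI_even]
    push_cast
    ring
end
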